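/- arXiv:2509.25473 — 2 statements merged into one kernel-verified Lean document; each statement's English description precedes it below -/
import Mathlib

section
/- For exchangeable real-valued scores E₁, …, Eₙ, E_{n+1}, if τ is the ⌈(1-α)(n+1)⌉-th smallest value among E₁, …, Eₙ (assuming ⌈(1-α)(n+1)⌉ ≤ n), then P(E_{n+1} ≤ τ) ≥ 1 - α. -/
/-!
The event `E (last n) ≤ τ` says exactly that fewer than `r` of the `n + 1` scores lie strictly
below `E (last n)`. At every outcome at least `r` of the `n + 1` indices have fewer than `r`
scores strictly below them, and by exchangeability each index has this property with the same
probability; hence `(n + 1) * P (E (last n) ≤ τ) ≥ r ≥ (1 - α) * (n + 1)`.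
-/

open MeasureTheory

/-- The `r`-th smallest value (order statistic of rank `r`) of `f : Fin n → ℝ`,
defined as the least `x` such that at least `r` of the values are `≤ x`. -/
noncomputable def orderStat {n : ℕ} (r : ℕ) (f : Fin n → ℝ) : ℝ :=
  sInf {x : ℝ | r ≤ (Finset.univ.filter (fun i => f i ≤ x)).card}

open Finset ENNReal

def strictRank {ι β : Type*} [Fintype ι] [LinearOrder β] (g : ι → β) (j : ι) : ℕ :=
  #{i | g i < g j}

section StrictRank

variable {ι β : Type*} [Fintype ι] [LinearOrder β]

theorem strictRank_comp_perm (g : ι → β) (σ : Equiv.Perm ι) (j : ι) :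
    strictRank (g ∘ σ) j = strictRank g (σ j) :=
  card_equiv σ (by simp)

theorem le_card_strictRank_lt (g : ι → β) {r : ℕ} (hr : r ≤ Fintype.card ι) :
    r ≤ #{j | strictRank g j < r} := by
  by_contra! h
  have hhigh : ({j | ¬strictRank g j < r} : Finset ι).Nonempty := by
    rw [← card_pos]
    have := card_filter_add_card_filter_not (s := univ) (fun j => strictRank g j < r)
    rw [card_univ] at this
    omega
  -- every score strictly below a lowest score of rank `≥ r` has rank `< r`
  obtain ⟨j₀, hj₀, hmin⟩ := exists_min_image _ g hhigh
  have hbelow : ({i | g i < g j₀} : Finset ι) ⊆ ({j | strictRank g j < r} : Finset ι) := by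
    intro i hi
    by_contra hi'
    simp only [mem_filter, mem_univ, true_and] at hi
    exact (hmin i (by simpa using hi')).not_gt hi
  simp only [mem_filter, mem_univ, true_and, not_lt] at hj₀
  exact (hj₀.trans (card_le_card hbelow)).not_gt h

end StrictRank

theorem le_orderStat_iff {n r : ℕ} (hr : 0 < r) (hrn : r ≤ n) (f : Fin n → ℝ) (e : ℝ) :
    e ≤ orderStat r f ↔ #{i | f i < e} < r := by
  have hne : {x : ℝ | r ≤ #{i | f i ≤ x}}.Nonempty := by
    obtain ⟨M, hM⟩ := (Set.finite_range f).bddAbove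
    refine ⟨M, ?_⟩
    simpa [filter_true_of_mem fun i _ => hM (Set.mem_range_self i)] using hrn
  have hbdd : BddBelow {x : ℝ | r ≤ #{i | f i ≤ x}} := by
    obtain ⟨m, hm⟩ := (Set.finite_range f).bddBelow
    refine ⟨m, fun x hx => ?_⟩
    obtain ⟨i, hi⟩ := card_pos.mp (hr.trans_le hx)
    exact (hm (Set.mem_range_self i)).trans (mem_filter.mp hi).2
  constructor
  · intro he
    by_contra! hcard
    obtain ⟨i₀, hi₀, hmax⟩ := exists_max_image _ f (card_pos.mp (hr.trans_le hcard))
    have hmem : f i₀ ∈ {x : ℝ | r ≤ #{i | f i ≤ x}} :=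
      hcard.trans (card_le_card fun i hi => by simpa using hmax i hi)
    exact ((csInf_le hbdd hmem).trans_lt (mem_filter.mp hi₀).2).not_ge he
  · intro hcard
    refine le_csInf hne fun x hx => ?_
    by_contra! hxe
    exact (hx.trans (card_le_card fun i hi => by simp at hi ⊢; linarith)).not_gt hcard

theorem le_orderStat_castSucc_iff {n r : ℕ} (hr : 0 < r) (hrn : r ≤ n) (g : Fin (n + 1) → ℝ) :
    g (Fin.last n) ≤ orderStat r (fun i : Fin n => g i.castSucc) ↔
      strictRank g (Fin.last n) < r := by
  rw [le_orderStat_iff hr hrn, strictRank, card_filter, card_filter, Fin.sum_univ_castSucc]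
  simp

theorem measurable_strictRank {ι : Type*} [Fintype ι] (j : ι) :
    Measurable fun g : ι → ℝ => strictRank g j := by
  simp_rw [strictRank, card_filter]
  exact Finset.measurable_sum _ fun i _ => Measurable.ite
    (measurableSet_lt (measurable_pi_apply i) (measurable_pi_apply j)) measurable_const
    measurable_const

theorem natCast_mul_measure_univ_le_sum_measure {Ω ι : Type*} [MeasurableSpace Ω] [Fintype ι]
    (μ : Measure Ω) {A : ι → Set Ω} [∀ j, DecidablePred (· ∈ A j)]
    (hA : ∀ j, MeasurableSet (A j)) {r : ℕ} (hr : ∀ ω, r ≤ #{j | ω ∈ A j}) :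
    r * μ Set.univ ≤ ∑ j, μ (A j) := by
  have hcount : ∀ ω, ∑ j, (A j).indicator 1 ω = (#{j | ω ∈ A j} : ℝ≥0∞) := fun ω => by
    simp only [Set.indicator_apply, Pi.one_apply, sum_boole]
  calc (r : ℝ≥0∞) * μ Set.univ = ∫⁻ _, (r : ℝ≥0∞) ∂μ := by rw [lintegral_const]
    _ ≤ ∫⁻ ω, ∑ j, (A j).indicator 1 ω ∂μ :=
      lintegral_mono fun ω => by rw [hcount]; exact Nat.cast_le.mpr (hr ω)
    _ = ∑ j, μ (A j) := by
      rw [lintegral_finsetSum _ fun j _ => measurable_one.indicator (hA j)]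
      exact sum_congr rfl fun j _ => lintegral_indicator_one (hA j)

section Exchangeable

variable {Ω ι : Type*} [MeasurableSpace Ω] {P : Measure Ω} {E : ι → Ω → ℝ}

theorem measure_preimage_perm_eq (hmeas : ∀ i, Measurable (E i))
    (hexch : ∀ σ : Equiv.Perm ι,
      Measure.map (fun ω => fun i => E (σ i) ω) P = Measure.map (fun ω => fun i => E i ω) P)
    (σ : Equiv.Perm ι) {B : Set (ι → ℝ)} (hB : MeasurableSet B) :
    P ((fun ω => fun i => E (σ i) ω) ⁻¹' B) = P ((fun ω => fun i => E i ω) ⁻¹' B) := by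
  rw [← Measure.map_apply (measurable_pi_lambda _ fun i => hmeas (σ i)) hB, hexch,
    Measure.map_apply (measurable_pi_lambda _ hmeas) hB]

theorem measure_strictRank_lt_eq [Fintype ι] [DecidableEq ι] (hmeas : ∀ i, Measurable (E i))
    (hexch : ∀ σ : Equiv.Perm ι,
      Measure.map (fun ω => fun i => E (σ i) ω) P = Measure.map (fun ω => fun i => E i ω) P)
    (r : ℕ) (j k : ι) :
    P {ω | strictRank (fun i => E i ω) j < r} = P {ω | strictRank (fun i => E i ω) k < r} := by
  have hswap : ∀ ω,
      strictRank (fun i => E (Equiv.swap j k i) ω) k = strictRank (fun i => E i ω) j := fun ω => by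
    rw [← Function.comp_def (fun i => E i ω), strictRank_comp_perm, Equiv.swap_apply_right]
  simpa only [Set.preimage, Set.mem_ofPred_eq, Set.mem_Iio, hswap] using
    measure_preimage_perm_eq hmeas hexch (Equiv.swap j k)
      (measurable_strictRank k measurableSet_Iio)

end Exchangeable

theorem split_conformal_coverage_general {Ω : Type*} [MeasurableSpace Ω]
    (P : Measure Ω) [IsProbabilityMeasure P]
    (n : ℕ) (E : Fin (n + 1) → Ω → ℝ) (hmeas : ∀ i, Measurable (E i))
    (hexch : ∀ σ : Equiv.Perm (Fin (n + 1)),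
      Measure.map (fun ω => fun i => E (σ i) ω) P = Measure.map (fun ω => fun i => E i ω) P)
    (α : ℝ) (hα : 0 < α ∧ α < 1)
    (r : ℕ) (hr : r = ⌈(1 - α) * (n + 1)⌉₊) (hrn : r ≤ n)
    (τ : Ω → ℝ) (hτ : ∀ ω, τ ω = orderStat r (fun i : Fin n => E i.castSucc ω)) :
    ENNReal.ofReal (1 - α) ≤ P {ω | E (Fin.last n) ω ≤ τ ω} := by
  have hr0 : 0 < r := hr ▸ Nat.ceil_pos.mpr (mul_pos (by linarith [hα.2]) (by positivity))
  set A : Fin (n + 1) → Set Ω := fun j => {ω | strictRank (fun i => E i ω) j < r}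
  have hevent : {ω | E (Fin.last n) ω ≤ τ ω} = A (Fin.last n) := by
    ext ω
    simp only [Set.mem_ofPred_eq, hτ, A]
    exact le_orderStat_castSucc_iff hr0 hrn fun i => E i ω
  have hcover : (r : ℝ≥0∞) ≤ (n + 1) * P (A (Fin.last n)) :=
    calc (r : ℝ≥0∞) = r * P Set.univ := by rw [measure_univ, mul_one]
      _ ≤ ∑ j, P (A j) :=
        natCast_mul_measure_univ_le_sum_measure P (A := A)
          (fun j => ((measurable_strictRank j).comp (measurable_pi_lambda _ hmeas))
            measurableSet_Iio)
          (fun ω => le_card_strictRank_lt (r := r) (fun i => E i ω) (by simp; omega))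
      _ = (n + 1) * P (A (Fin.last n)) := by
        rw [sum_congr rfl fun j _ => measure_strictRank_lt_eq hmeas hexch r j (Fin.last n)]
        simp [A]
  have hceil : ENNReal.ofReal (1 - α) * (n + 1) ≤ r :=
    calc ENNReal.ofReal (1 - α) * (n + 1) = ENNReal.ofReal ((1 - α) * (n + 1)) := by
          rw [ENNReal.ofReal_mul' (by positivity), ENNReal.ofReal_add (by positivity) zero_le_one,
            ENNReal.ofReal_natCast, ENNReal.ofReal_one]
      _ ≤ ENNReal.ofReal r := ENNReal.ofReal_le_ofReal (hr ▸ Nat.le_ceil _)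
      _ = r := ENNReal.ofReal_natCast r
  rw [hevent, ← ENNReal.mul_le_mul_iff_left (by positivity : ((n : ℝ≥0∞) + 1) ≠ 0) (by simp)]
  exact hceil.trans (hcover.trans_eq (mul_comm _ _))

/-- split conformal coverage guarantee.  If `E 0, …, E n` are exchangeable
real-valued scores and `τ` is the `⌈(1-α)(n+1)⌉`-th smallest value among the first `n`
scores (with `⌈(1-α)(n+1)⌉ ≤ n`), then `P(E_{n+1} ≤ τ) ≥ 1 - α`. -/
theorem split_conformal_coverage {Ω : Type*} [MeasurableSpace Ω]
    (P : Measure Ω) [IsProbabilityMeasure P]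
    (n : ℕ) (hn : 0 < n) (E : Fin (n + 1) → Ω → ℝ) (hmeas : ∀ i, Measurable (E i))
    (hexch : ∀ σ : Equiv.Perm (Fin (n + 1)),
      Measure.map (fun ω => fun i => E (σ i) ω) P = Measure.map (fun ω => fun i => E i ω) P)
    (α : ℝ) (hα : 0 < α ∧ α < 1)
    (r : ℕ) (hr : r = ⌈(1 - α) * (n + 1)⌉₊) (hrn : r ≤ n)
    (τ : Ω → ℝ) (hτ : ∀ ω, τ ω = orderStat r (fun i : Fin n => E i.castSucc ω)) :
    ENNReal.ofReal (1 - α) ≤ P {ω | E (Fin.last n) ω ≤ τ ω} :=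
  split_conformal_coverage_general P n E hmeas hexch α hα r hr hrn τ hτ
end

section
/- For i.i.d. (or exchangeable) scores, the conformal p-value p = (|{i ∈ {1,…,n} : Eᵢ ≥ E_{n+1}}| + 1)/(n+1) satisfies P(p ≤ α) ≤ α for every α ∈ [0,1]; equivalently P(p > α) ≥ 1 - α. -/
/-!
For `x : ι → α`, `countGE x j` counts the other coordinates that are at least `x j`, so the
p-value is `(countGE E (last n) + 1) / (n + 1)`. For every sample, at most `k` of the
scores have `countGE < k`: the smallest of them is dominated by all the others. By
exchangeability `P (countGE E j < k)` does not depend on `j`, and summing over `j` gives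
`(n + 1) · P (p ≤ α) ≤ ⌊(n + 1) α⌋`.
-/

open MeasureTheory Finset
open scoped ENNReal

section Counting

variable {ι α : Type*} [Fintype ι] [DecidableEq ι] [LinearOrder α]

def countGE (x : ι → α) (j : ι) : ℕ := #{i | i ≠ j ∧ x j ≤ x i}

lemma countGE_comp_perm (x : ι → α) (σ : Equiv.Perm ι) (j : ι) :
    countGE (x ∘ σ) j = countGE x (σ j) := by
  refine card_bij' (fun i _ => σ i) (fun i _ => σ.symm i) ?_ ?_ (by simp) (by simp)
  · intro i hi
    simpa only [mem_filter, mem_univ, true_and, Function.comp_apply, ne_eq,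
      EmbeddingLike.apply_eq_iff_eq] using hi
  · intro i hi
    simp only [mem_filter, mem_univ, true_and, Function.comp_apply,
      Equiv.apply_symm_apply] at hi ⊢
    exact ⟨fun h => hi.1 (by rw [← h, Equiv.apply_symm_apply]), hi.2⟩

lemma card_sub_one_le_countGE_of_isMin (x : ι → α) {s : Finset ι} {j : ι} (hj : j ∈ s)
    (hmin : ∀ i ∈ s, x j ≤ x i) : #s - 1 ≤ countGE x j := by
  rw [← card_erase_of_mem hj]
  refine card_le_card fun i hi => ?_
  obtain ⟨hij, his⟩ := mem_erase.mp hi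
  exact mem_filter.mpr ⟨mem_univ i, hij, hmin i his⟩

lemma card_countGE_lt_le (x : ι → α) (k : ℕ) : #{j | countGE x j < k} ≤ k := by
  by_contra! hk
  obtain ⟨j, hj, hmin⟩ := exists_min_image {j | countGE x j < k} x (card_pos.mp (by omega))
  have hle := card_sub_one_le_countGE_of_isMin x hj hmin
  have hlt := (mem_filter.mp hj).2
  omega

lemma countGE_last {n : ℕ} (x : Fin (n + 1) → α) :
    countGE x (Fin.last n) = #{i : Fin n | x (Fin.last n) ≤ x i.castSucc} := by
  refine card_bij' (fun i hi => i.castPred (mem_filter.mp hi).2.1) (fun i _ => i.castSucc)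
    ?_ ?_ (by simp) (by simp)
  · intro i hi
    simp only [mem_filter, mem_univ, true_and] at hi ⊢
    simpa using hi.2
  · intro i hi
    simp only [mem_filter, mem_univ, true_and] at hi ⊢
    exact ⟨(Fin.castSucc_lt_last i).ne, hi⟩

end Counting

section Exchangeable

open Classical in
lemma sum_measure_le_of_card_mem_le {β ι : Type*} [MeasurableSpace β] [Fintype ι]
    (μ : Measure β) {s : ι → Set β} (hs : ∀ i, MeasurableSet (s i)) {k : ℕ}
    (hk : ∀ x, #{i | x ∈ s i} ≤ k) : ∑ i, μ (s i) ≤ k * μ Set.univ :=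
  calc ∑ i, μ (s i) = ∑ i, ∫⁻ x, (s i).indicator 1 x ∂μ := by
        simp only [lintegral_indicator_one (hs _)]
    _ = ∫⁻ x, ∑ i, (s i).indicator 1 x ∂μ :=
        (lintegral_finsetSum _ fun i _ => measurable_one.indicator (hs i)).symm
    _ = ∫⁻ x, (#{i | x ∈ s i} : ℝ≥0∞) ∂μ := by
        congr with x
        simp only [Set.indicator_apply, Pi.one_apply, sum_boole]
    _ ≤ ∫⁻ _, (k : ℝ≥0∞) ∂μ := lintegral_mono fun x => Nat.cast_le.mpr (hk x)
    _ = k * μ Set.univ := lintegral_const _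

variable {Ω ι α : Type*} [MeasurableSpace Ω] [Fintype ι] [DecidableEq ι] [LinearOrder α]
  [MeasurableSpace α] [TopologicalSpace α] [OpensMeasurableSpace α] [OrderClosedTopology α]
  [SecondCountableTopology α]

lemma measurable_countGE (j : ι) : Measurable fun x : ι → α => countGE x j := by
  simp only [countGE, card_filter]
  refine Finset.measurable_sum _ fun i _ => Measurable.ite ?_ measurable_const measurable_const
  exact (MeasurableSet.const _).inter
    (measurableSet_le (measurable_pi_apply j) (measurable_pi_apply i))

lemma measure_countGE_lt_eq {P : Measure Ω} {X : Ω → ι → α} (hX : Measurable X)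
    (hexch : ∀ σ : Equiv.Perm ι, P.map (fun ω => X ω ∘ σ) = P.map X) (k : ℕ) (j j' : ι) :
    P {ω | countGE (X ω) j < k} = P {ω | countGE (X ω) j' < k} := by
  have hB : MeasurableSet {x : ι → α | countGE x j' < k} :=
    measurable_countGE j' measurableSet_Iio
  have hσ : Measurable fun ω => X ω ∘ Equiv.swap j j' :=
    measurable_pi_lambda _ fun i => (measurable_pi_apply _).comp hX
  calc P {ω | countGE (X ω) j < k}
      = P.map (fun ω => X ω ∘ Equiv.swap j j') {x | countGE x j' < k} := by
        rw [Measure.map_apply hσ hB]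
        simp only [Set.preimage_ofPred_eq, countGE_comp_perm, Equiv.swap_apply_right]
    _ = P {ω | countGE (X ω) j' < k} := by rw [hexch, Measure.map_apply hX hB]; rfl

theorem card_mul_measure_countGE_lt_le {P : Measure Ω} {X : Ω → ι → α} (hX : Measurable X)
    (hexch : ∀ σ : Equiv.Perm ι, P.map (fun ω => X ω ∘ σ) = P.map X) (k : ℕ) (j : ι) :
    Fintype.card ι * P {ω | countGE (X ω) j < k} ≤ k * P Set.univ :=
  calc (Fintype.card ι : ℝ≥0∞) * P {ω | countGE (X ω) j < k}
      = ∑ j', P {ω | countGE (X ω) j' < k} := by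
        simp [measure_countGE_lt_eq hX hexch k _ j]
    _ ≤ k * P Set.univ :=
        sum_measure_le_of_card_mem_le P (s := fun j' => {ω | countGE (X ω) j' < k})
          (fun j' => hX (measurable_countGE j' measurableSet_Iio))
          fun ω => by simpa only [Set.mem_ofPred_eq] using card_countGE_lt_le (X ω) k

end Exchangeable

lemma ENNReal.le_ofReal_of_natCast_mul_le_floor {a : ℝ≥0∞} {m : ℕ} {α : ℝ} (hm : m ≠ 0)
    (hα : 0 ≤ α) (h : m * a ≤ ⌊m * α⌋₊) : a ≤ ENNReal.ofReal α := by
  refine (ENNReal.mul_le_mul_iff_right (by exact_mod_cast hm) (ENNReal.natCast_ne_top m)).mp ?_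
  calc (m : ℝ≥0∞) * a ≤ ⌊m * α⌋₊ := h
    _ = ENNReal.ofReal ⌊m * α⌋₊ := (ENNReal.ofReal_natCast _).symm
    _ ≤ ENNReal.ofReal (m * α) := ENNReal.ofReal_le_ofReal (Nat.floor_le (by positivity))
    _ = m * ENNReal.ofReal α := by rw [ENNReal.ofReal_mul (by positivity), ENNReal.ofReal_natCast]

/-- validity of conformal p-values.  For exchangeable scores
`E 0, …, E n`, the p-value `p = (1 + #{i ≤ n : Eᵢ ≥ E_{n+1}})/(n+1)` satisfies
`P(p ≤ α) ≤ α` for every `α ∈ [0,1]`. -/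
theorem conformal_pvalue_valid {Ω : Type*} [MeasurableSpace Ω]
    (P : Measure Ω) [IsProbabilityMeasure P]
    (n : ℕ) (E : Fin (n + 1) → Ω → ℝ) (hmeas : ∀ i, Measurable (E i))
    (hexch : ∀ σ : Equiv.Perm (Fin (n + 1)),
      Measure.map (fun ω => fun i => E (σ i) ω) P = Measure.map (fun ω => fun i => E i ω) P)
    (p : Ω → ℝ)
    (hp : ∀ ω, p ω =
      ((Finset.univ.filter (fun i : Fin n => E (Fin.last n) ω ≤ E i.castSucc ω)).card + 1)
        / (n + 1)) :
    ∀ α : ℝ, α ∈ Set.Icc (0 : ℝ) 1 → P {ω | p ω ≤ α} ≤ ENNReal.ofReal α := by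
  rintro α ⟨hα, -⟩
  set X : Ω → Fin (n + 1) → ℝ := fun ω i => E i ω
  set k := ⌊((n + 1 : ℕ) : ℝ) * α⌋₊
  have hset : {ω | p ω ≤ α} = {ω | countGE (X ω) (Fin.last n) < k} := by
    ext ω
    rw [Set.mem_ofPred_eq, Set.mem_ofPred_eq, hp, countGE_last, Nat.lt_iff_add_one_le,
      Nat.le_floor_iff' (Nat.succ_ne_zero _), div_le_iff₀ (by positivity), mul_comm]
    push_cast
    rfl
  have hbound :=
    card_mul_measure_countGE_lt_le (measurable_pi_lambda X hmeas) hexch k (Fin.last n)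
  rw [measure_univ, mul_one, Fintype.card_fin] at hbound
  rw [hset]
  exact ENNReal.le_ofReal_of_natCast_mul_le_floor (Nat.succ_ne_zero n) hα hbound
end
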